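/- Let α, β be multiplicatively independent real numbers > 1. Then there exist integer sequences (a_n), (b_n) which are nearly linear recurrence sequences, with a_n = ⌊α^n⌋ and b_n = ⌊γ β^n + u⌋ for some real γ > 0 and some u ∈ {-1, 0, 1}, such that a_k = b_m holds for infinitely many pairs of non-negative integers (k, m); moreover the set of such pairs (k, m) has finite intersection with every rational line {(k,m) : Ak + Bm + C = 0} with (A,B) ≠ (0,0) rational. -/

import Mathlib

/-!
Both sequences have the form `⌊x ρ ^ n⌋`, which differs from `ρ` times its predecessor by at
most `|ρ| + 1`. As `log α / log β` is irrational, the numbers `k log α - m log β` with `k, m ∈ ℕ`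
and `m ≥ M` are dense in `ℝ`; so for each `M` the `t` with `⌊α ^ k⌋ < exp t * β ^ m < ⌊α ^ k⌋ + 1`
for some `k` and some `m ≥ M` form a dense open set, and by Baire's theorem some `t` lies in all
of them: `γ = exp t` and `u = 0` work. Conversely `⌊α ^ k⌋ = ⌊γ β ^ m⌋` bounds
`|k log α - m log β|`, and this linear form is independent of any rational `A k + B m` because
`A log β + B log α ≠ 0`, so only finitely many solutions lie on a rational line.
-/

open Finset

/-- A sequence of integers is a nearly linear recurrence sequence. -/
def IsNLRS (c : ℕ → ℤ) : Prop :=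
  ∃ d : ℕ, 1 ≤ d ∧ ∃ A : ℕ → ℂ, ∃ M : ℝ, ∀ n : ℕ,
    ‖(c (n + d) : ℂ) + ∑ i ∈ Finset.range d, A i * (c (n + i) : ℂ)‖ ≤ M

open Real

theorem isNLRS_floor_mul_pow (x ρ : ℝ) : IsNLRS (fun n => ⌊x * ρ ^ n⌋) := by
  refine ⟨1, le_rfl, fun _ => -(ρ : ℂ), |ρ| + 1, fun n => ?_⟩
  have hfract : (⌊x * ρ ^ (n + 1)⌋ : ℝ) - ρ * ⌊x * ρ ^ n⌋
      = ρ * Int.fract (x * ρ ^ n) - Int.fract (x * ρ ^ (n + 1)) := by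
    rw [← Int.self_sub_fract, ← Int.self_sub_fract]; ring
  simp only [Finset.sum_range_one, add_zero, neg_mul, ← sub_eq_add_neg]
  rw [← Complex.ofReal_intCast, ← Complex.ofReal_intCast, ← Complex.ofReal_mul,
    ← Complex.ofReal_sub, Complex.norm_real, Real.norm_eq_abs, hfract]
  calc |ρ * Int.fract (x * ρ ^ n) - Int.fract (x * ρ ^ (n + 1))|
      ≤ |ρ| * Int.fract (x * ρ ^ n) + Int.fract (x * ρ ^ (n + 1)) := by
        grw [abs_sub, abs_mul, abs_of_nonneg (Int.fract_nonneg (x * ρ ^ n)),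
          abs_of_nonneg (Int.fract_nonneg (x * ρ ^ (n + 1)))]
    _ ≤ |ρ| * 1 + 1 := by gcongr <;> exact (Int.fract_lt_one _).le
    _ = |ρ| + 1 := by rw [mul_one]

theorem irrational_log_div_log {α β : ℝ} (hα : 0 < α) (hβ : 0 < β)
    (hmi : ∀ m n : ℤ, α ^ m * β ^ n = 1 → m = 0 ∧ n = 0) :
    Irrational (log α / log β) := by
  have pow_eq_one {m n : ℤ} (h : m * log α + n * log β = 0) : α ^ m * β ^ n = 1 :=
    eq_one_of_pos_of_log_eq_zero (by positivity) <| by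
      rw [log_mul (by positivity) (by positivity), log_zpow, log_zpow, h]
  have hβ1 : log β ≠ 0 := fun h => by
    simpa using hmi 0 1 (pow_eq_one (by simp [h]))
  rintro ⟨r, hr⟩
  have hlog : (r.den : ℤ) * log α + (-r.num : ℤ) * log β = 0 := by
    rw [eq_div_iff hβ1] at hr
    rw [← hr, Rat.cast_def]
    push_cast
    field_simp
    ring
  exact r.den_ne_zero (by exact_mod_cast (hmi _ _ (pow_eq_one hlog)).1)

theorem exists_nat_add_nat_mul_mem_Ioc {K : Type*} [Field K] [LinearOrder K]
    [IsStrictOrderedRing K] [FloorSemiring K] {x y t : K} (hy : 0 < y) (hxt : x ≤ t) :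
    ∃ n : ℕ, x + n * y ∈ Set.Ioc t (t + y) := by
  refine ⟨⌊(t - x) / y⌋₊ + 1, ?_, ?_⟩
  · have := Nat.lt_floor_add_one ((t - x) / y)
    rw [div_lt_iff₀ hy] at this
    push_cast
    linarith
  · have := Nat.floor_le (div_nonneg (sub_nonneg.2 hxt) hy.le)
    rw [le_div_iff₀ hy] at this
    push_cast
    linarith

theorem exists_nat_mul_sub_nat_mul_ne_zero_abs_lt {a b ε : ℝ} (ha : 0 < a) (hb : 0 < b)
    (hab : Irrational (a / b)) (hε : 0 < ε) :
    ∃ k m : ℕ, k * a - m * b ≠ 0 ∧ |k * a - m * b| < ε := by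
  obtain ⟨n, hn⟩ := exists_nat_gt (b / ε)
  have hn₀ : 0 < n := by exact_mod_cast (div_pos hb hε).trans hn
  obtain ⟨j, k, hk, -, hjk⟩ := exists_int_int_abs_mul_sub_le (a / b) hn₀
  have hdist : |k * a - j * b| = b * |k * (a / b) - j| := by
    rw [← abs_of_pos hb, ← abs_mul, abs_of_pos hb]
    congr 1
    field_simp
  have hn₁ : (1 : ℝ) / (n + 1) < 1 := by
    rw [div_lt_one (by positivity)]; norm_cast; omega
  have hj : 0 ≤ j := by
    have hξ : (0 : ℝ) < k * (a / b) := mul_pos (by exact_mod_cast hk) (div_pos ha hb)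
    have : ((-1 : ℤ) : ℝ) < j := by push_cast; linarith [(abs_le.1 hjk).2]
    have := Int.cast_lt.1 this
    omega
  lift k to ℕ using hk.le
  lift j to ℕ using hj
  refine ⟨k, j, fun h => ?_, ?_⟩
  · refine (irrational_iff_ne_rational _).1 hab j k (by exact_mod_cast hk.ne') ?_
    field_simp
    push_cast
    linarith
  · push_cast at hdist hjk ⊢
    rw [hdist]
    calc b * |k * (a / b) - j| ≤ b * (1 / (n + 1)) := by gcongr
      _ < ε := by
        rw [div_lt_iff₀ hε] at hn
        rw [mul_one_div, div_lt_iff₀ (by positivity)]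
        nlinarith

theorem exists_nat_mul_sub_nat_mul_mem_Ioo_of_pos {a b t s : ℝ} {k₀ m₀ : ℕ} (hb : 0 < b)
    (hpos : 0 < k₀ * a - m₀ * b) (hlt : k₀ * a - m₀ * b < s - t) (M : ℕ) :
    ∃ k m : ℕ, M ≤ k ∧ M ≤ m ∧ k * a - m * b ∈ Set.Ioo t s := by
  set L := M + ⌈(M * a - t) / b⌉₊
  have hbase : M * a - L * b ≤ t := by
    have := Nat.le_ceil ((M * a - t) / b)
    rw [div_le_iff₀ hb] at this
    have : (M : ℝ) * b ≥ 0 := by positivity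
    simp only [L]; push_cast; nlinarith
  obtain ⟨n, hn₁, hn₂⟩ := exists_nat_add_nat_mul_mem_Ioc hpos hbase
  refine ⟨M + n * k₀, L + n * m₀, by omega, by omega, ?_, ?_⟩ <;> push_cast <;> linarith

theorem exists_nat_mul_sub_nat_mul_mem_Ioo {a b t s : ℝ} (ha : 0 < a) (hb : 0 < b)
    (hab : Irrational (a / b)) (hts : t < s) (M : ℕ) :
    ∃ k m : ℕ, M ≤ m ∧ k * a - m * b ∈ Set.Ioo t s := by
  obtain ⟨k₀, m₀, hne, hlt⟩ :=
    exists_nat_mul_sub_nat_mul_ne_zero_abs_lt ha hb hab (sub_pos.2 hts)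
  rcases hne.lt_or_gt with hneg | hpos
  · obtain ⟨k, m, hk, -, hkm⟩ := exists_nat_mul_sub_nat_mul_mem_Ioo_of_pos
      (a := b) (b := a) (t := -s) (s := -t) (k₀ := m₀) (m₀ := k₀) ha (by linarith)
      (by linarith [neg_abs_le (k₀ * a - m₀ * b)]) M
    exact ⟨m, k, hk, by linarith [hkm.2], by linarith [hkm.1]⟩
  · obtain ⟨k, m, -, hm, hkm⟩ :=
      exists_nat_mul_sub_nat_mul_mem_Ioo_of_pos (t := t) (s := s) hb hpos
      (by linarith [le_abs_self (k₀ * a - m₀ * b)]) M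
    exact ⟨k, m, hm, hkm⟩

theorem exists_pow_div_pow_mem_Ioo {α β c d : ℝ} (hα : 1 < α) (hβ : 1 < β)
    (hαβ : Irrational (log α / log β)) (hc : 0 < c) (hcd : c < d) (M : ℕ) :
    ∃ k m : ℕ, M ≤ m ∧ α ^ k / β ^ m ∈ Set.Ioo c d := by
  obtain ⟨k, m, hm, hlo, hhi⟩ := exists_nat_mul_sub_nat_mul_mem_Ioo (log_pos hα) (log_pos hβ)
    hαβ (log_lt_log hc hcd) M
  have hlog : log (α ^ k / β ^ m) = k * log α - m * log β := by
    rw [log_div (by positivity) (by positivity), log_pow, log_pow]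
  have hpos : 0 < α ^ k / β ^ m := by positivity
  refine ⟨k, m, hm, ?_, ?_⟩
  · rwa [← log_lt_log_iff hc hpos, hlog]
  · rwa [← log_lt_log_iff hpos (hc.trans hcd), hlog]

theorem exists_mem_Ioo_mul_pow_mem_Ioo_floor_pow {α β c d : ℝ} (hα : 1 < α) (hβ : 1 < β)
    (hαβ : Irrational (log α / log β)) (hc : 0 < c) (hcd : c < d) (M : ℕ) :
    ∃ γ ∈ Set.Ioo c d, ∃ k m : ℕ, M ≤ m ∧
      γ * β ^ m ∈ Set.Ioo (⌊α ^ k⌋ : ℝ) (⌊α ^ k⌋ + 1) := by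
  set e := (d - c) / 3
  have he : 0 < e := by positivity
  obtain ⟨M', hM'⟩ := pow_unbounded_of_one_lt (1 / e) hβ
  obtain ⟨k, m, hm, hlo, hhi⟩ :=
    exists_pow_div_pow_mem_Ioo hα hβ hαβ (c := c + e) (d := d - e) (by positivity)
      (by simp only [e]; linarith) (max M M')
  have hβm : 0 < β ^ m := by positivity
  have hgap : 1 < e * β ^ m := by
    rw [div_lt_iff₀ he] at hM'
    linarith [mul_le_mul_of_nonneg_right (pow_le_pow_right₀ hβ.le (le_of_max_le_right hm)) he.le]
  rw [lt_div_iff₀ hβm] at hlo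
  rw [div_lt_iff₀ hβm] at hhi
  -- `γ β ^ m = ⌊α ^ k⌋ + 1 / 2`; the margin `e β ^ m > 1` absorbs the rounding of `α ^ k`.
  refine ⟨(⌊α ^ k⌋ + 1 / 2) / β ^ m, ⟨?_, ?_⟩, k, m, le_of_max_le_left hm, ?_⟩
  · rw [lt_div_iff₀ hβm]; linarith [Int.sub_one_lt_floor (α ^ k)]
  · rw [div_lt_iff₀ hβm]; linarith [Int.floor_le (α ^ k)]
  · rw [div_mul_cancel₀ _ hβm.ne']; constructor <;> linarith

theorem exists_pos_infinite_setOf_floor_pow_eq_floor_mul_pow {α β : ℝ} (hα : 1 < α)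
    (hβ : 1 < β) (hαβ : Irrational (log α / log β)) :
    ∃ γ : ℝ, 0 < γ ∧ {p : ℕ × ℕ | ⌊α ^ p.1⌋ = ⌊γ * β ^ p.2⌋}.Infinite := by
  let U : ℕ → Set ℝ := fun M => ⋃ k, ⋃ m ∈ Set.Ici M,
    (fun t => exp t * β ^ m) ⁻¹' Set.Ioo (⌊α ^ k⌋ : ℝ) (⌊α ^ k⌋ + 1)
  have hopen (M : ℕ) : IsOpen (U M) :=
    isOpen_iUnion fun k => isOpen_biUnion fun m _ => isOpen_Ioo.preimage (by fun_prop)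
  have hdense (M : ℕ) : Dense (U M) := dense_of_exists_between fun c d hcd => by
    obtain ⟨γ, ⟨hcγ, hγd⟩, k, m, hm, hγ⟩ :=
      exists_mem_Ioo_mul_pow_mem_Ioo_floor_pow hα hβ hαβ (exp_pos c) (exp_lt_exp.2 hcd) M
    have hγ₀ : 0 < γ := (exp_pos c).trans hcγ
    refine ⟨log γ, Set.mem_iUnion.2 ⟨k, Set.mem_iUnion₂.2 ⟨m, hm, ?_⟩⟩, ?_, ?_⟩
    · rwa [Set.mem_preimage, exp_log hγ₀]
    · rwa [lt_log_iff_exp_lt hγ₀]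
    · rwa [log_lt_iff_lt_exp hγ₀]
  obtain ⟨t, ht⟩ := (dense_iInter_of_isOpen_nat hopen hdense).nonempty
  refine ⟨exp t, exp_pos t, ?_⟩
  refine Set.Infinite.of_image Prod.snd (Set.infinite_of_forall_exists_gt fun M => ?_)
  have htM := Set.mem_iInter.1 ht (M + 1)
  simp only [U, Set.mem_iUnion, Set.mem_preimage, Set.mem_Ici] at htM
  obtain ⟨k, m, hm, hkm⟩ := htM
  exact ⟨m, ⟨(k, m), (Int.floor_eq_iff.2 ⟨hkm.1.le, hkm.2⟩).symm, rfl⟩, hm⟩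

theorem abs_log_sub_log_le_log_two_of_floor_eq {x y : ℝ} (hx : 1 ≤ x) (h : ⌊x⌋ = ⌊y⌋) :
    |log x - log y| ≤ log 2 := by
  have hN : (1 : ℝ) ≤ ⌊x⌋ := by exact_mod_cast Int.le_floor.2 (by exact_mod_cast hx)
  have hx₁ := Int.floor_le x
  have hx₂ := Int.lt_floor_add_one x
  have hy₁ := Int.floor_le y
  have hy₂ := Int.lt_floor_add_one y
  rw [← h] at hy₁ hy₂
  have hy : 0 < y := by linarith
  have hyx : log y ≤ log 2 + log x := by
    rw [← log_mul two_ne_zero (by positivity)]; exact log_le_log hy (by linarith)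
  have hxy : log x ≤ log 2 + log y := by
    rw [← log_mul two_ne_zero hy.ne']; exact log_le_log (by linarith) (by linarith)
  rw [abs_le]; constructor <;> linarith

theorem finite_setOf_abs_le_and_linear_eq {a b A B C R : ℝ} (hD : A * b + B * a ≠ 0) :
    {p : ℕ × ℕ | |p.1 * a - p.2 * b| ≤ R ∧ A * p.1 + B * p.2 + C = 0}.Finite := by
  set D := A * b + B * a
  refine ((Set.finite_Iic ⌊(|B| * R + |C * b|) / |D|⌋₊).prod
    (Set.finite_Iic ⌊(|A| * R + |C * a|) / |D|⌋₊)).subset ?_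
  rintro ⟨k, m⟩ ⟨hR, hline⟩
  set L := k * a - m * b
  -- Cramer's rule for the system `A k + B m = -C`, `a k - b m = L`.
  have hk : k * D = B * L - C * b := by linear_combination b * hline
  have hm : m * D = -(A * L) - C * a := by linear_combination a * hline
  refine ⟨Nat.le_floor ?_, Nat.le_floor ?_⟩ <;> rw [le_div_iff₀ (abs_pos.2 hD)]
  · calc (k : ℝ) * |D| = |B * L - C * b| := by rw [← hk, abs_mul, Nat.abs_cast]
      _ ≤ |B| * R + |C * b| := (abs_sub _ _).trans (by rw [abs_mul]; gcongr)
  · calc (m : ℝ) * |D| = |-(A * L) - C * a| := by rw [← hm, abs_mul, Nat.abs_cast]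
      _ ≤ |A| * R + |C * a| := (abs_sub _ _).trans (by rw [abs_neg, abs_mul]; gcongr)

theorem Irrational.rat_mul_add_rat_mul_ne_zero {a b : ℝ} (hab : Irrational (a / b)) {A B : ℚ}
    (hAB : (A, B) ≠ (0, 0)) : (A : ℝ) * b + B * a ≠ 0 := by
  intro h
  have hb : b ≠ 0 := by rintro rfl; simp at hab
  by_cases hB : B = 0
  · subst hB
    simp_all
  · refine hab.ne_rat (-A / B) ?_
    push_cast
    field_simp
    linarith

theorem nlrs_with_infinitely_many_common_terms
    (α β : ℝ) (hα : 1 < α) (hβ : 1 < β)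
    (hmi : ∀ m n : ℤ, α ^ m * β ^ n = 1 → m = 0 ∧ n = 0) :
    ∃ (γ : ℝ) (u : ℤ), 0 < γ ∧ u ∈ ({-1, 0, 1} : Set ℤ) ∧
      IsNLRS (fun n => ⌊α ^ n⌋) ∧
      IsNLRS (fun n => ⌊γ * β ^ n + u⌋) ∧
      {p : ℕ × ℕ | ⌊α ^ p.1⌋ = ⌊γ * β ^ p.2 + u⌋}.Infinite ∧
      (∀ A B C : ℚ, (A, B) ≠ (0, 0) →
        {p : ℕ × ℕ | ⌊α ^ p.1⌋ = ⌊γ * β ^ p.2 + u⌋ ∧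
          (A : ℝ) * p.1 + (B : ℝ) * p.2 + (C : ℝ) = 0}.Finite) := by
  have hαβ := irrational_log_div_log (by linarith) (by linarith) hmi
  obtain ⟨γ, hγ, hinf⟩ := exists_pos_infinite_setOf_floor_pow_eq_floor_mul_pow hα hβ hαβ
  refine ⟨γ, 0, hγ, by simp, by simpa using isNLRS_floor_mul_pow 1 α,
    by simpa using isNLRS_floor_mul_pow γ β, by simpa using hinf, fun A B C hAB => ?_⟩
  refine (finite_setOf_abs_le_and_linear_eq (R := log 2 + |log γ|) (C := C)
    (hαβ.rat_mul_add_rat_mul_ne_zero hAB)).subset ?_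
  rintro ⟨k, m⟩ ⟨hkm, hline⟩
  refine ⟨?_, hline⟩
  have hstrip := abs_log_sub_log_le_log_two_of_floor_eq (one_le_pow₀ hα.le) (by simpa using hkm)
  rw [log_pow, log_mul hγ.ne' (by positivity), log_pow] at hstrip
  calc |k * log α - m * log β| = |(k * log α - (log γ + m * log β)) + log γ| := by ring_nf
    _ ≤ log 2 + |log γ| := (abs_add_le _ _).trans (by gcongr)
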